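/- arXiv:1009.4026 — 4 statements merged into one kernel-verified Lean document; each statement's English description precedes it below -/
import Mathlib

section
/- Let A be an abelian group such that the n-torsion subgroup A[n] is finite for every positive integer n. Then A_Div = A_div, i.e., the maximal divisible subgroup coincides with the subgroup of divisible elements. -/
/-- The subgroup `nA` of an abelian group `A`. -/
def nSub (A : Type*) [AddCommGroup A] (n : ℕ) : AddSubgroup A :=
  (n • AddMonoidHom.id A).range

/-- The maximal divisible subgroup `A_Div`: the image of the natural map
`Hom(ℚ, A) → Hom(ℤ, A) = A`, i.e. the set of values `φ 1` for `φ : ℚ →+ A`. -/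
def maxDivSub (A : Type*) [AddCommGroup A] : AddSubgroup A where
  carrier := {a | ∃ φ : ℚ →+ A, φ 1 = a}
  zero_mem' := ⟨0, rfl⟩
  add_mem' := by rintro a b ⟨φ, rfl⟩ ⟨ψ, rfl⟩; exact ⟨φ + ψ, rfl⟩
  neg_mem' := by rintro a ⟨φ, rfl⟩; exact ⟨-φ, rfl⟩

/-- The subgroup of divisible elements `A_div := ⋂_{n > 0} nA`. -/
def divElemSub (A : Type*) [AddCommGroup A] : AddSubgroup A :=
  ⨅ (n : ℕ) (_ : 0 < n), nSub A n

/-! A homomorphism `φ : ℚ →+ A` divides `φ 1` by every `n` as `φ (1 / n)`, so `A_Div ⊆ A_div`.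
Conversely, finiteness of `A[n]` makes the set of solutions of `n • b = a` finite. If none of
them lay in `A_div`, each would avoid some `m_b A`, yet dividing `a` by `n * ∏ m_b` produces a
solution lying in all of them. So `A_div` is a divisible group, hence an injective `ℤ`-module,
and `1 ↦ a` extends from `ℤ` to `ℚ`. -/

section

variable {A : Type*} [AddCommGroup A]

theorem mem_nSub {n : ℕ} {a : A} : a ∈ nSub A n ↔ ∃ b : A, n • b = a := by
  simp [nSub]

theorem mem_divElemSub {a : A} : a ∈ divElemSub A ↔ ∀ n : ℕ, 0 < n → ∃ b : A, n • b = a := by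
  simp only [divElemSub, AddSubgroup.mem_iInf, mem_nSub]

theorem nSub_le_of_dvd {m n : ℕ} (h : m ∣ n) : nSub A n ≤ nSub A m := by
  obtain ⟨k, rfl⟩ := h
  rintro a ⟨b, rfl⟩
  exact mem_nSub.2 ⟨k • b, by simp [mul_smul]⟩

theorem maxDivSub_le_divElemSub : maxDivSub A ≤ divElemSub A := by
  rintro _ ⟨φ, rfl⟩
  refine mem_divElemSub.2 fun n hn => ⟨φ (1 / n), ?_⟩
  rw [← map_nsmul, nsmul_eq_mul, mul_one_div_cancel (by exact_mod_cast hn.ne')]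

theorem finite_nsmul_eq_of_finite_torsion {n : ℕ} (h : Finite {x : A // n • x = 0}) (a : A) :
    Finite {b : A // n • b = a} := by
  rcases isEmpty_or_nonempty {b : A // n • b = a} with _ | ⟨b₀, hb₀⟩
  · infer_instance
  refine Finite.of_injective (fun b => (⟨b.1 - b₀, by rw [smul_sub, b.2, hb₀, sub_self]⟩ :
    {x : A // n • x = 0})) fun b b' hbb' => Subtype.ext ?_
  simpa using congrArg Subtype.val hbb'

theorem exists_nsmul_eq_mem_divElemSub (hfin : ∀ n : ℕ, 0 < n → Finite {x : A // n • x = 0})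
    {a : A} (ha : a ∈ divElemSub A) {n : ℕ} (hn : 0 < n) :
    ∃ b ∈ divElemSub A, n • b = a := by
  by_contra! hnone
  have := finite_nsmul_eq_of_finite_torsion (hfin n hn) a
  have := Fintype.ofFinite {b : A // n • b = a}
  have hbad (b : {b : A // n • b = a}) : ∃ m, 0 < m ∧ b.1 ∉ nSub A m := by
    simpa [divElemSub, AddSubgroup.mem_iInf] using fun h => hnone b.1 h b.2
  choose m hm_pos hm_not using hbad
  obtain ⟨c, hc⟩ := mem_divElemSub.1 ha (n * ∏ b, m b)
    (Nat.mul_pos hn (Finset.prod_pos fun b _ => hm_pos b))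
  let b : {b : A // n • b = a} := ⟨(∏ b, m b) • c, by rw [smul_smul, hc]⟩
  exact hm_not b <| nSub_le_of_dvd (Finset.dvd_prod_of_mem m (Finset.mem_univ b))
    (mem_nSub.2 ⟨c, rfl⟩)

noncomputable abbrev divisibleByDivElemSub
    (hfin : ∀ n : ℕ, 0 < n → Finite {x : A // n • x = 0}) : DivisibleBy (divElemSub A) ℤ :=
  letI : DivisibleBy (divElemSub A) ℕ :=
    divisibleByOfSMulRightSurj _ ℕ fun {n} hn x => by
      obtain ⟨b, hb, hba⟩ := exists_nsmul_eq_mem_divElemSub hfin x.2 (Nat.pos_of_ne_zero hn)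
      exact ⟨⟨b, hb⟩, Subtype.ext hba⟩
  AddGroup.divisibleByIntOfDivisibleByNat _

end

theorem DivisibleBy.exists_ratHom_apply_one {D : Type*} [AddCommGroup D] [DivisibleBy D ℤ]
    (d : D) : ∃ φ : ℚ →+ D, φ 1 = d := by
  obtain ⟨φ, hφ⟩ := (Module.Baer.of_divisible D).extension_property_addMonoidHom
    (Int.castAddHom ℚ) Int.cast_injective (zmultiplesHom D d)
  exact ⟨φ, by simpa using DFunLike.congr_fun hφ 1⟩

/-- If the `n`-torsion subgroup `A[n]` is finite for every positive integer `n`, then the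
maximal divisible subgroup `A_Div` coincides with the subgroup `A_div` of divisible elements. -/
theorem maxDivSub_eq_divElemSub (A : Type*) [AddCommGroup A]
    (hfin : ∀ n : ℕ, 0 < n → Finite {a : A // n • a = 0}) :
    maxDivSub A = divElemSub A := by
  refine le_antisymm maxDivSub_le_divElemSub fun a ha => ?_
  let _ := divisibleByDivElemSub hfin
  obtain ⟨φ, hφ⟩ := DivisibleBy.exists_ratHom_apply_one (⟨a, ha⟩ : divElemSub A)
  exact ⟨(divElemSub A).subtype.comp φ, congrArg Subtype.val hφ⟩
end

section
/- Let f : A → B be a homomorphism of abelian groups. Suppose there exists N ∈ Z_{>0} such that for all n ∈ Z_{>0}, the canonical map ker(f ⊗ Z/nN) → ker(f ⊗ Q/Z) is bijective. Then the inverse limit lim_n ker(f ⊗ Z/n), with transition maps induced by the identity on A, vanishes. -/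
/-- The map `f/n : A/nA → B/nB` induced by a homomorphism `f : A →+ B`. -/
def modMap {A B : Type*} [AddCommGroup A] [AddCommGroup B] (f : A →+ B) (n : ℕ) :
    A ⧸ nSub A n →+ B ⧸ nSub B n :=
  QuotientAddGroup.map _ _ f (by
    rintro a ⟨b, rfl⟩
    exact ⟨f b, by simp⟩)

/-- The transition map `A/nmA → A/nA` of the inverse system, induced by the identity of `A`. -/
def transMap (A : Type*) [AddCommGroup A] (n m : ℕ) :
    A ⧸ nSub A (n * m) →+ A ⧸ nSub A n :=
  QuotientAddGroup.map _ _ (AddMonoidHom.id A) (by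
    rintro a ⟨b, rfl⟩
    exact ⟨m • b, by simp [mul_smul, mul_comm]⟩)

/-- The group `ℚ/ℤ`. -/
abbrev QmodZ : Type := AddCircle (1 : ℚ)

lemma aux_smul (j : ℕ) (hj : 0 < j) :
    (j : ℤ) • ((((j:ℚ)⁻¹ : ℚ) : QmodZ)) = 0 := by
  have h2 : ((j:ℤ) • ((j:ℚ)⁻¹ : ℚ) : ℚ) = 1 := by
    rw [zsmul_eq_mul]; push_cast
    exact mul_inv_cancel₀ (by positivity)
  have : (j : ℤ) • ((((j:ℚ)⁻¹ : ℚ) : QmodZ)) = (((j:ℤ) • ((j:ℚ)⁻¹ : ℚ) : ℚ) : QmodZ) := by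
    norm_cast
  rw [this, h2]
  exact AddCircle.coe_period 1

lemma aux_smul2 (k : ℕ) (hk : 0 < k) :
    (k : ℤ) • (((((k*k:ℕ):ℚ)⁻¹ : ℚ) : QmodZ)) = ((((k:ℕ):ℚ)⁻¹ : ℚ) : QmodZ) := by
  have : (k : ℤ) • (((((k*k:ℕ):ℚ)⁻¹ : ℚ) : QmodZ))
      = (((k:ℤ) • (((k*k:ℕ):ℚ)⁻¹ : ℚ) : ℚ) : QmodZ) := by
    norm_cast
  rw [this]
  congr 1
  rw [zsmul_eq_mul]
  push_cast
  field_simp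

lemma aux_tors (A : Type*) [AddCommGroup A] (k : ℕ) (x : A ⧸ nSub A k) : (k : ℤ) • x = 0 := by
  obtain ⟨a, rfl⟩ := QuotientAddGroup.mk'_surjective _ x
  rw [← map_zsmul, QuotientAddGroup.mk'_apply, QuotientAddGroup.eq_zero_iff]
  exact ⟨a, by simp [natCast_zsmul]⟩

open TensorProduct in
/-- Let `f : A → B` be a homomorphism of abelian groups.  Suppose that there is an
`N ∈ ℤ_{>0}` such that for all `n ∈ ℤ_{>0}` the canonical map
`ker(f ⊗ ℤ/nN) → ker(f ⊗ ℚ/ℤ)` (induced by `a mod nN ↦ a ⊗ (1/nN)`) is bijective, i.e.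
every element of `ker(f ⊗ ℚ/ℤ)` is related to a unique element of `ker(f/nN)` under the
graph of this canonical map.  Then the inverse limit `lim_n ker(f/n)`, with transition maps
induced by the identity of `A`, vanishes: every compatible family is zero. -/
theorem limKer_eq_zero {A B : Type*} [AddCommGroup A] [AddCommGroup B] (f : A →+ B)
    (H : ∃ N : ℕ, 0 < N ∧ ∀ n : ℕ, 0 < n →
      ∀ y ∈ LinearMap.ker (LinearMap.rTensor QmodZ f.toIntLinearMap),
        ∃! x : A ⧸ nSub A (n * N),
          modMap f (n * N) x = 0 ∧
          ∃ a : A, QuotientAddGroup.mk' (nSub A (n * N)) a = x ∧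
            a ⊗ₜ[ℤ] (((((n * N : ℕ) : ℚ)⁻¹ : ℚ) : QmodZ)) = y)
    (c : ∀ n : ℕ, 0 < n → A ⧸ nSub A n)
    (hker : ∀ (n : ℕ) (hn : 0 < n), modMap f n (c n hn) = 0)
    (hcompat : ∀ (n m : ℕ) (hn : 0 < n) (hm : 0 < m),
      transMap A n m (c (n * m) (Nat.mul_pos hn hm)) = c n hn) :
    ∀ (n : ℕ) (hn : 0 < n), c n hn = 0 := by
  obtain ⟨N, hN, hH⟩ := H
  intro n hn
  have hk : 0 < n * N := Nat.mul_pos hn hN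
  have hK : 0 < (n * N) * (n * N) := Nat.mul_pos hk hk
  set k := n * N with hkdef
  -- a lift of `c (k*k)`
  obtain ⟨a, ha⟩ := QuotientAddGroup.mk'_surjective (nSub A (k * k)) (c (k * k) hK)
  -- `a` also lifts `c k`
  have hak : QuotientAddGroup.mk' (nSub A k) a = c k hk := by
    have := hcompat k k hk hk
    rw [← this, ← ha]
    rfl
  -- `f a ∈ (k*k) B`
  obtain ⟨b, hb⟩ : f a ∈ nSub B (k * k) := by
    have h1 := hker (k * k) hK
    rw [← ha] at h1
    exact (QuotientAddGroup.eq_zero_iff _).mp h1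
  have hb' : ((k * k : ℕ) : ℤ) • b = f a := by
    rw [natCast_zsmul]; simpa using hb
  -- the two ℚ/ℤ elements
  set q2 : QmodZ := ((((k*k : ℕ) : ℚ)⁻¹ : ℚ) : QmodZ) with hq2
  set q1 : QmodZ := ((((k : ℕ) : ℚ)⁻¹ : ℚ) : QmodZ) with hq1
  set y : A ⊗[ℤ] QmodZ := a ⊗ₜ[ℤ] q2 with hy
  have hymem : y ∈ LinearMap.ker (LinearMap.rTensor QmodZ f.toIntLinearMap) := by
    rw [LinearMap.mem_ker, hy, LinearMap.rTensor_tmul]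
    have : f.toIntLinearMap a = f a := rfl
    rw [this, ← hb', smul_tmul, hq2, aux_smul (k * k) hK, tmul_zero]
  set y' : A ⊗[ℤ] QmodZ := a ⊗ₜ[ℤ] q1 with hy'
  have hy'eq : y' = (k : ℤ) • y := by
    rw [hy, hy', ← tmul_smul, hq1, hq2, aux_smul2 k hk]
  have hy'mem : y' ∈ LinearMap.ker (LinearMap.rTensor QmodZ f.toIntLinearMap) := by
    rw [LinearMap.mem_ker, hy'eq, map_zsmul, LinearMap.mem_ker.mp hymem, smul_zero]
  -- existence at level k for y
  obtain ⟨x, ⟨hx0, a'', ha''mk, ha''t⟩, -⟩ := hH n hn y hymem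
  -- uniqueness at level k for y'
  obtain ⟨x', -, hx'uniq⟩ := hH n hn y' hy'mem
  have h1 : c k hk = x' := hx'uniq (c k hk) ⟨hker k hk, a, hak, hy'.symm⟩
  have h2 : (k : ℤ) • x = x' := by
    refine hx'uniq ((k : ℤ) • x) ⟨by rw [map_zsmul, hx0, smul_zero], (k : ℤ) • a'', ?_, ?_⟩
    · rw [map_zsmul, ha''mk]
    · rw [← smul_tmul', ha''t, hy'eq]
  have : c k hk = 0 := by
    rw [h1, ← h2, aux_tors]
  have hfinal := hcompat n N hn hN
  rw [← hfinal]
  show transMap A n N (c k hk) = 0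
  rw [this, map_zero]
end

section
/- Let f : A → B be a homomorphism of abelian groups such that B_div = 0 and such that for some N > 0 the canonical maps ker(f ⊗ Z/nN) → ker(f ⊗ Q/Z) are bijective for all n > 0. Then ker(f) = A_div. -/
lemma mem_nSub_iff {A : Type*} [AddCommGroup A] {n : ℕ} {a : A} :
    a ∈ nSub A n ↔ ∃ c, n • c = a := by
  constructor
  · rintro ⟨c, rfl⟩; exact ⟨c, by simp⟩
  · rintro ⟨c, rfl⟩; exact ⟨c, by simp⟩

lemma modMap_mk {A B : Type*} [AddCommGroup A] [AddCommGroup B] (f : A →+ B) (n : ℕ) (a : A) :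
    modMap f n (QuotientAddGroup.mk' _ a) = QuotientAddGroup.mk' _ (f a) := rfl


open TensorProduct in
/-- Let `f : A → B` be a homomorphism of abelian groups such that `B_div = 0` and such that
for some `N > 0` the canonical maps `ker(f ⊗ ℤ/nN) → ker(f ⊗ ℚ/ℤ)` (induced by
`a mod nN ↦ a ⊗ (1/nN)`) are bijective for all `n > 0`.  Then `ker f = A_div`. -/
theorem ker_eq_divElemSub {A B : Type*} [AddCommGroup A] [AddCommGroup B] (f : A →+ B)
    (hB : ∀ b : B, (∀ n : ℕ, 0 < n → b ∈ nSub B n) → b = 0)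
    (H : ∃ N : ℕ, 0 < N ∧ ∀ n : ℕ, 0 < n →
      ∀ y ∈ LinearMap.ker (LinearMap.rTensor QmodZ f.toIntLinearMap),
        ∃! x : A ⧸ nSub A (n * N),
          modMap f (n * N) x = 0 ∧
          ∃ a : A, QuotientAddGroup.mk' (nSub A (n * N)) a = x ∧
            a ⊗ₜ[ℤ] (((((n * N : ℕ) : ℚ)⁻¹ : ℚ) : QmodZ)) = y) :
    f.ker = divElemSub A := by
  obtain ⟨N, hN0, hH⟩ := H
  ext a
  simp only [AddMonoidHom.mem_ker, divElemSub, AddSubgroup.mem_iInf]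
  constructor
  · intro ha n
    intro hn
    have hnN : (0:ℕ) < n * N := Nat.mul_pos hn hN0
    set y : A ⊗[ℤ] QmodZ := a ⊗ₜ[ℤ] (((((n * N : ℕ) : ℚ)⁻¹ : ℚ) : QmodZ)) with hy
    have hyker : y ∈ LinearMap.ker (LinearMap.rTensor QmodZ f.toIntLinearMap) := by
      simp [hy, ha]
    obtain ⟨x₁, ⟨hx₁0, a₁, hx₁, ha₁⟩, -⟩ := hH 1 one_pos y hyker
    obtain ⟨xn, -, hxuniq⟩ := hH n hn y hyker
    -- candidate 1: [a]
    have h1 : QuotientAddGroup.mk' (nSub A (n * N)) a = xn := by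
      apply hxuniq
      refine ⟨?_, a, rfl, rfl⟩
      rw [modMap_mk, ha]
      simp
    -- candidate 2: [n • a₁]
    have hfa₁ : f a₁ ∈ nSub B (1 * N) := by
      have := hx₁
      rw [← hx₁, modMap_mk] at hx₁0
      exact (QuotientAddGroup.eq_zero_iff _).mp hx₁0
    have h2 : QuotientAddGroup.mk' (nSub A (n * N)) (n • a₁) = xn := by
      apply hxuniq
      constructor
      · rw [modMap_mk]
        rw [QuotientAddGroup.mk'_apply, QuotientAddGroup.eq_zero_iff]
        obtain ⟨c, hc⟩ := mem_nSub_iff.mp hfa₁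
        refine mem_nSub_iff.mpr ⟨c, ?_⟩
        rw [map_nsmul, ← hc, ← mul_smul, one_mul]
      · refine ⟨n • a₁, rfl, ?_⟩
        rw [smul_tmul, ← ha₁]
        congr 1
        rw [← QuotientAddGroup.mk_nsmul]
        congr 1
        have hnq : (n : ℚ) ≠ 0 := Nat.cast_ne_zero.mpr hn.ne'
        have hNq : (N : ℚ) ≠ 0 := Nat.cast_ne_zero.mpr hN0.ne'
        rw [nsmul_eq_mul]
        push_cast
        field_simp
    -- conclude
    have : QuotientAddGroup.mk' (nSub A (n * N)) a
        = QuotientAddGroup.mk' (nSub A (n * N)) (n • a₁) := by rw [h1, h2]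
    have hmem : a - n • a₁ ∈ nSub A (n * N) :=
      (QuotientAddGroup.eq_iff_sub_mem).mp this
    obtain ⟨c, hc⟩ := mem_nSub_iff.mp hmem
    refine mem_nSub_iff.mpr ⟨a₁ + N • c, ?_⟩
    rw [smul_add, ← mul_smul, hc]
    abel
  · intro hdiv
    apply hB
    intro n hn
    obtain ⟨c, hc⟩ := mem_nSub_iff.mp (hdiv n hn)
    exact mem_nSub_iff.mpr ⟨f c, by rw [← map_nsmul, hc]⟩
end

section
/- Let A be an abelian group, D its maximal divisible subgroup, and suppose A/D is finitely generated, and every A[n] is finite. If f : A → B is a homomorphism with ker(f ⊗ Z/n) = 0 for all n ∈ Z_{>0} and B has no nonzero divisible elements, then ker(f) = A_Div. -/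
lemma fg_no_div (G : Type*) [AddCommGroup G] [AddGroup.FG G] (x : G)
    (h : ∀ n : ℕ, 0 < n → ∃ y, n • y = x) : x = 0 := by
  obtain ⟨n, ι, fι, p, hp, e, ⟨E⟩⟩ := AddCommGroup.equiv_free_prod_directSum_zmod G
  have key : E x = 0 := by
    ext1
    · -- free part
      ext j
      simp only [Finsupp.coe_zero, Pi.zero_apply, Prod.fst_zero]
      have hdvd : ∀ m : ℕ, 0 < m → (m : ℤ) ∣ (E x).1 j := by
        intro m hm
        obtain ⟨y, hy⟩ := h m hm
        refine ⟨(E y).1 j, ?_⟩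
        have : E x = m • E y := by rw [← hy]; simp
        rw [this]
        simp [mul_comm]
      by_contra h0
      have hd := hdvd ((E x).1 j).natAbs.succ (Nat.succ_pos _)
      have h2 := Int.le_of_dvd (abs_pos.mpr h0) ((dvd_abs _ _).mpr hd)
      rw [Int.abs_eq_natAbs] at h2
      omega
    · -- torsion part
      classical
      set N : ℕ := ∏ i, p i ^ e i with hN
      have hNpos : 0 < N := Finset.prod_pos fun i _ => pow_pos (hp i).pos _
      obtain ⟨y, hy⟩ := h N hNpos
      have hEx : E x = N • E y := by rw [← hy]; simp
      rw [hEx]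
      simp only [Prod.snd_zero]
      refine DFinsupp.ext fun i => ?_
      simp only [Prod.smul_snd, DFinsupp.zero_apply]
      rw [DFinsupp.coe_smul, Pi.smul_apply]
      have hd : (p i ^ e i : ℕ) ∣ N := Finset.dvd_prod_of_mem _ (Finset.mem_univ i)
      have : (N : ZMod (p i ^ e i)) = 0 := by
        haveI : NeZero (p i ^ e i) := ⟨pow_ne_zero _ (hp i).ne_zero⟩
        exact (ZMod.natCast_eq_zero_iff _ _).mpr hd
      calc (N : ℕ) • ((E y).2 i) = (N : ZMod (p i ^ e i)) * ((E y).2 i) := by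
            rw [← nsmul_eq_mul]
          _ = 0 := by rw [this, zero_mul]
  have := congrArg E.symm key
  simpa using this

/-- Let `A` be an abelian group with maximal divisible subgroup `D = A_Div`, such that
`A/D` is finitely generated and every torsion subgroup `A[n]` is finite.  If `f : A → B`
is a homomorphism with `ker(f ⊗ ℤ/n) = 0` for all `n > 0` and `B` has no nonzero divisible
elements, then `ker f = A_Div`. -/
theorem ker_eq_maxDivSub
    {A B : Type*} [AddCommGroup A] [AddCommGroup B]
    (hfg : AddGroup.FG (A ⧸ maxDivSub A))
    (hfin : ∀ n : ℕ, 0 < n → Finite {a : A // n • a = 0})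
    (f : A →+ B)
    (hker : ∀ n : ℕ, 0 < n → Function.Injective (modMap f n))
    (hB : ∀ b : B, (∀ n : ℕ, 0 < n → b ∈ nSub B n) → b = 0) :
    f.ker = maxDivSub A := by
  ext a
  constructor
  · intro ha
    have ha' : f a = 0 := ha
    have hdiv : ∀ n : ℕ, 0 < n → a ∈ nSub A n := by
      intro n hn
      have h0 : modMap f n (QuotientAddGroup.mk a) = 0 := by
        show QuotientAddGroup.mk (f a) = 0
        rw [ha']; rfl
      have hm : (QuotientAddGroup.mk a : A ⧸ nSub A n) = 0 :=
        hker n hn (by rw [h0, map_zero])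
      exact (QuotientAddGroup.eq_zero_iff a).mp hm
    have hx : (QuotientAddGroup.mk a : A ⧸ maxDivSub A) = 0 := by
      apply fg_no_div
      intro n hn
      obtain ⟨b, hb⟩ := hdiv n hn
      simp only [AddMonoidHom.smul_apply, AddMonoidHom.id_apply] at hb
      exact ⟨QuotientAddGroup.mk b, by rw [← QuotientAddGroup.mk_nsmul, hb]⟩
    exact (QuotientAddGroup.eq_zero_iff a).mp hx
  · rintro ⟨φ, rfl⟩
    have : f (φ 1) = 0 := by
      apply hB
      intro n hn
      refine ⟨f (φ ((n : ℚ)⁻¹)), ?_⟩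
      show n • f (φ ((n : ℚ)⁻¹)) = f (φ 1)
      rw [← map_nsmul, ← map_nsmul]
      congr 1
      rw [nsmul_eq_mul]
      field_simp
    exact this
end
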